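/- arXiv:2311.00249 — 4 statements merged into one kernel-verified Lean document; each statement's English description precedes it below -/
import Mathlib

section
/- The relation α ≥ β, defined by 'β can be obtained from α by a (possibly empty) finite sequence of elementary operations', is a partial order on multi-segments; in particular it is antisymmetric: if α ≥ β and β ≥ α then α = β. -/
namespace MS

variable {R : Type*} [CommRing R] [LinearOrder R] [IsStrictOrderedRing R] [FloorRing R]

/-- Number of elements of the segment `[Δ.1, Δ.2]` (integer steps of size 1). -/
def segLen (Δ : R × R) : ℕ := (⌊Δ.2 - Δ.1⌋).toNat + 1

/-- `Δ` is a genuine segment: its end is its base plus a natural number. -/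
def IsSeg (Δ : R × R) : Prop := ∃ n : ℕ, Δ.2 = Δ.1 + (n : R)

/-- Membership of `x` in the segment `Δ = [b,e] = {b, b+1, ..., e}`. -/
def segMem (x : R) (Δ : R × R) : Prop := ∃ j : ℕ, j < segLen Δ ∧ x = Δ.1 + (j : R)

/-- The support of a segment: the multiset `{b, b+1, ..., e}`. -/
def segSupp (Δ : R × R) : Multiset R :=
  (Multiset.range (segLen Δ)).map (fun (j : ℕ) => Δ.1 + (j : R))

/-- The support of a multi-segment: multiset sum of the supports of its segments. -/
def msSupp (α : Multiset (R × R)) : Multiset R := (α.map segSupp).sum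

/-- Containment of segments, as sets. -/
def SubSeg (Δ1 Δ2 : R × R) : Prop := ∀ x : R, segMem x Δ1 → segMem x Δ2

/-- Segments are linked: their union is a segment and neither contains the other. -/
def Linked (Δ1 Δ2 : R × R) : Prop :=
  (∃ Δ : R × R, IsSeg Δ ∧ ∀ x : R, segMem x Δ ↔ (segMem x Δ1 ∨ segMem x Δ2)) ∧
    ¬ SubSeg Δ1 Δ2 ∧ ¬ SubSeg Δ2 Δ1

/-- `β` is obtained from `α` by one elementary operation: replace a linked pair
`{Δ1, Δ2}` by `{Δ1 ∪ Δ2, Δ1 ∩ Δ2}`, dropping the intersection if empty. -/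
def ElemOp (α β : Multiset (R × R)) : Prop :=
  ∃ Δ1 Δ2 γ, α = Δ1 ::ₘ Δ2 ::ₘ γ ∧ Linked Δ1 Δ2 ∧
    β = (if max Δ1.1 Δ2.1 ≤ min Δ1.2 Δ2.2 then
          (min Δ1.1 Δ2.1, max Δ1.2 Δ2.2) ::ₘ (max Δ1.1 Δ2.1, min Δ1.2 Δ2.2) ::ₘ γ
        else (min Δ1.1 Δ2.1, max Δ1.2 Δ2.2) ::ₘ γ)

/-- The Zelevinsky ordering: `MsGE β α` means `β ≥ α`, i.e. `α` is obtained from `β`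
by a finite (possibly empty) sequence of elementary operations. -/
def MsGE (β α : Multiset (R × R)) : Prop := Relation.ReflTransGen ElemOp β α

/-- `c = [Δ_e, Δ_{e-1}, ..., Δ_m]` is a chain selected by the greedy rule of the
Mœglin–Waldspurger algorithm applied to the multi-segment `β`. -/
def IsMWChain (β : Multiset (R × R)) (c : List (R × R)) : Prop :=
  c ≠ [] ∧ (↑c : Multiset (R × R)) ≤ β ∧
  (∀ Δ ∈ β, Δ.2 ≤ (c.headD (0, 0)).2) ∧
  (∀ Δ ∈ β, Δ.2 = (c.headD (0, 0)).2 → Δ.1 ≤ (c.headD (0, 0)).1) ∧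
  c.Chain' (fun Δ Δ' => Δ'.2 = Δ.2 - 1 ∧ Δ'.1 < Δ.1 ∧
      ∀ Γ ∈ β, Γ.2 = Δ.2 - 1 → Γ.1 < Δ.1 → Γ.1 ≤ Δ'.1) ∧
  (∀ Γ ∈ β, Γ.2 = (c.getLastD (0, 0)).2 - 1 → ¬ Γ.1 < (c.getLastD (0, 0)).1)

/-- One step of the Mœglin–Waldspurger algorithm: from `β`, produce the segment
`Δ = M(β) = [m, e]` and the remainder `β' = β \ M(β)` (each selected segment is
shortened by one at its end, empty segments being removed). -/
def MWStep (β : Multiset (R × R)) (Δ : R × R) (β' : Multiset (R × R)) : Prop :=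
  ∃ c : List (R × R), IsMWChain β c ∧
    Δ = ((c.getLastD (0, 0)).2, (c.headD (0, 0)).2) ∧
    β' = (β - ↑c) + ↑((c.filter (fun Γ => Γ.1 ≠ Γ.2)).map (fun Γ => (Γ.1, Γ.2 - 1)))

/-- The Mœglin–Waldspurger involution, as a relation:
`α~ = ∅` if `α = ∅`, and `α~ = {M(α)} + (α \ M(α))~` otherwise. -/
inductive MWDual : Multiset (R × R) → Multiset (R × R) → Prop
  | empty : MWDual 0 0
  | step {β β' γ : Multiset (R × R)} {Δ : R × R} :
      MWStep β Δ β' → MWDual β' γ → MWDual β (Δ ::ₘ γ)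

/-- The staircase multi-segment `{[x - j, x + len - j] : 0 ≤ j ≤ cnt}`.
`stair b ℓ s` is `δ_{b,e,s}` with `e = b + ℓ`; for naturals `d, a`,
`stair ((a-d)/2) d a` is the Arthur staircase `δ_{d,a}`. -/
def stair (x : R) (len cnt : ℕ) : Multiset (R × R) :=
  (Multiset.range (cnt + 1)).map (fun (j : ℕ) => (x - (j : R), x + (len : R) - (j : R)))

end MS



/-!
Each elementary operation strictly increases the sum of the squared lengths of the segments.
For a linked pair `[b₁, e₁], [b₂, e₂]` with `b₁ < b₂` and `e₁ < e₂`, replacing it by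
`[b₁, e₂], [b₂, e₁]` raises that sum by `2 (e₂ - e₁) (b₂ - b₁) > 0`; when the intersection is
empty the pair is adjacent (`b₂ = e₁ + 1`), so the dropped segment `[b₂, e₁]` would have length
`0` and the same computation applies. Hence `α ≥ β ≥ α` with `α ≠ β` would make this energy
strictly smaller than itself.
-/

namespace MS

lemma segMem_int_iff {x : ℤ} {Δ : ℤ × ℤ} (h : Δ.1 ≤ Δ.2) :
    segMem x Δ ↔ Δ.1 ≤ x ∧ x ≤ Δ.2 := by
  simp only [segMem, segLen, Int.floor_int, id]
  constructor
  · rintro ⟨j, hj, rfl⟩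
    omega
  · rintro ⟨hx1, hx2⟩
    exact ⟨(x - Δ.1).toNat, by omega, by omega⟩

lemma subSeg_int_of_le {Δ1 Δ2 : ℤ × ℤ} (h1 : Δ1.1 ≤ Δ1.2) (h2 : Δ2.1 ≤ Δ2.2)
    (hb : Δ2.1 ≤ Δ1.1) (he : Δ1.2 ≤ Δ2.2) : SubSeg Δ1 Δ2 := fun x hx => by
  rw [segMem_int_iff h1] at hx
  rw [segMem_int_iff h2]
  omega

namespace Linked

variable {Δ1 Δ2 : ℤ × ℤ}

lemma lt_and_lt_or_lt_and_lt (h1 : Δ1.1 ≤ Δ1.2) (h2 : Δ2.1 ≤ Δ2.2) (hL : Linked Δ1 Δ2) :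
    Δ1.1 < Δ2.1 ∧ Δ1.2 < Δ2.2 ∨ Δ2.1 < Δ1.1 ∧ Δ2.2 < Δ1.2 := by
  obtain ⟨-, h12, h21⟩ := hL
  have : ¬(Δ2.1 ≤ Δ1.1 ∧ Δ1.2 ≤ Δ2.2) := fun h => h12 (subSeg_int_of_le h1 h2 h.1 h.2)
  have : ¬(Δ1.1 ≤ Δ2.1 ∧ Δ2.2 ≤ Δ1.2) := fun h => h21 (subSeg_int_of_le h2 h1 h.1 h.2)
  omega

lemma max_fst_le_min_snd_add_one (h1 : Δ1.1 ≤ Δ1.2) (h2 : Δ2.1 ≤ Δ2.2) (hL : Linked Δ1 Δ2) :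
    max Δ1.1 Δ2.1 ≤ min Δ1.2 Δ2.2 + 1 := by
  obtain ⟨⟨Δ, ⟨n, hn⟩, hunion⟩, -, -⟩ := hL
  have hΔ : Δ.1 ≤ Δ.2 := by omega
  simp only [segMem_int_iff hΔ, segMem_int_iff h1, segMem_int_iff h2] at hunion
  -- Otherwise `min Δ1.2 Δ2.2 + 1` is a gap in the union, which lies between its end points.
  have := hunion Δ1.1
  have := hunion Δ1.2
  have := hunion Δ2.1
  have := hunion Δ2.2
  have := hunion (min Δ1.2 Δ2.2 + 1)
  omega

end Linked

def energy (α : Multiset (ℤ × ℤ)) : ℤ := (α.map fun Δ => (Δ.2 - Δ.1 + 1) ^ 2).sum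

@[simp]
lemma energy_cons (Δ : ℤ × ℤ) (α : Multiset (ℤ × ℤ)) :
    energy (Δ ::ₘ α) = (Δ.2 - Δ.1 + 1) ^ 2 + energy α := by
  simp [energy]

lemma sq_add_sq_lt_of_lt_of_lt {b₁ e₁ b₂ e₂ : ℤ} (hb : b₁ < b₂) (he : e₁ < e₂) :
    (e₁ - b₁ + 1) ^ 2 + (e₂ - b₂ + 1) ^ 2 < (e₂ - b₁ + 1) ^ 2 + (e₁ - b₂ + 1) ^ 2 := by
  nlinarith [mul_pos (sub_pos.2 he) (sub_pos.2 hb)]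

namespace ElemOp

variable {α β : Multiset (ℤ × ℤ)}

lemma forall_fst_le_snd (hα : ∀ Δ ∈ α, Δ.1 ≤ Δ.2) (h : ElemOp α β) : ∀ Δ ∈ β, Δ.1 ≤ Δ.2 := by
  obtain ⟨Δ1, Δ2, γ, rfl, -, rfl⟩ := h
  simp only [Multiset.forall_mem_cons] at hα
  obtain ⟨h1, h2, hγ⟩ := hα
  have hunion : min Δ1.1 Δ2.1 ≤ max Δ1.2 Δ2.2 := by omega
  split_ifs with hinter
  · simpa only [Multiset.forall_mem_cons] using ⟨hunion, hinter, hγ⟩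
  · simpa only [Multiset.forall_mem_cons] using ⟨hunion, hγ⟩

lemma energy_lt (hα : ∀ Δ ∈ α, Δ.1 ≤ Δ.2) (h : ElemOp α β) : energy α < energy β := by
  obtain ⟨⟨b₁, e₁⟩, ⟨b₂, e₂⟩, γ, rfl, hL, rfl⟩ := h
  have h1 : b₁ ≤ e₁ := hα (b₁, e₁) (by simp)
  have h2 : b₂ ≤ e₂ := hα (b₂, e₂) (by simp)
  have hadj := hL.max_fst_le_min_snd_add_one h1 h2
  have hβ : energy (if max b₁ b₂ ≤ min e₁ e₂ then
        (min b₁ b₂, max e₁ e₂) ::ₘ (max b₁ b₂, min e₁ e₂) ::ₘ γ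
      else (min b₁ b₂, max e₁ e₂) ::ₘ γ) =
      (max e₁ e₂ - min b₁ b₂ + 1) ^ 2 + (min e₁ e₂ - max b₁ b₂ + 1) ^ 2 + energy γ := by
    split_ifs with hinter
    · simp only [energy_cons]
      ring
    · have hempty : min e₁ e₂ - max b₁ b₂ + 1 = 0 := by omega
      simp only [energy_cons, hempty]
      ring
  simp only [hβ, energy_cons]
  rcases hL.lt_and_lt_or_lt_and_lt h1 h2 with ⟨hb, he⟩ | ⟨hb, he⟩
  · rw [min_eq_left hb.le, max_eq_right he.le, max_eq_right hb.le, min_eq_left he.le]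
    linarith [sq_add_sq_lt_of_lt_of_lt hb he]
  · rw [min_eq_right hb.le, max_eq_left he.le, max_eq_left hb.le, min_eq_right he.le]
    linarith [sq_add_sq_lt_of_lt_of_lt hb he]

end ElemOp

namespace MsGE

variable {α β : Multiset (ℤ × ℤ)}

lemma forall_fst_le_snd (hα : ∀ Δ ∈ α, Δ.1 ≤ Δ.2) (h : MsGE α β) : ∀ Δ ∈ β, Δ.1 ≤ Δ.2 := by
  induction h with
  | refl => exact hα
  | tail _ hop ih => exact hop.forall_fst_le_snd ih

lemma energy_le (hα : ∀ Δ ∈ α, Δ.1 ≤ Δ.2) (h : MsGE α β) : energy α ≤ energy β := by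
  induction h with
  | refl => exact le_rfl
  | tail hαγ hop ih => exact ih.trans (hop.energy_lt (forall_fst_le_snd hα hαγ)).le

end MsGE

end MS

theorem msGE_antisymm_general (α β : Multiset (ℤ × ℤ))
    (hvalα : ∀ Δ ∈ α, Δ.1 ≤ Δ.2)
    (h1 : MS.MsGE α β) (h2 : MS.MsGE β α) : α = β := by
  rcases Relation.ReflTransGen.cases_head h1 with rfl | ⟨γ, hαγ, hγβ : MS.MsGE γ β⟩
  · rfl
  · have hγ := hαγ.forall_fst_le_snd hvalα
    exact absurd (calc
      MS.energy α < MS.energy γ := hαγ.energy_lt hvalα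
      _ ≤ MS.energy β := hγβ.energy_le hγ
      _ ≤ MS.energy α := h2.energy_le (hγβ.forall_fst_le_snd hγ)) (lt_irrefl _)

/-- the Zelevinsky order is antisymmetric. -/
theorem msGE_antisymm (α β : Multiset (ℤ × ℤ))
    (hvalα : ∀ Δ ∈ α, Δ.1 ≤ Δ.2) (hvalβ : ∀ Δ ∈ β, Δ.1 ≤ Δ.2)
    (h1 : MS.MsGE α β) (h2 : MS.MsGE β α) : α = β :=
  msGE_antisymm_general α β hvalα h1 h2
end

section
/- If a nontrivial elementary operation transforms multi-segment α into β (replacing a genuinely linked pair), then the sum over all segments Δ of β of l(Δ)^2 is strictly greater than the corresponding sum for α, where l([b,e]) = e − b + 1. -/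
namespace MS

theorem sq_add_sq_lt_sq_add_sq {R : Type*} [CommRing R] [LinearOrder R] [IsStrictOrderedRing R]
    {p q u i : R} (hsum : p + q = u + i) (hp : p < u) (hq : q < u) :
    p ^ 2 + q ^ 2 < u ^ 2 + i ^ 2 := by
  -- with `i = p + q - u`, the difference of the two sides is `2 (u - p) (u - q)`
  obtain rfl : i = p + q - u := by rw [hsum]; ring
  nlinarith [mul_pos (sub_pos.2 hp) (sub_pos.2 hq)]

theorem segMem_iff_of_le {Δ : ℤ × ℤ} (hΔ : Δ.1 ≤ Δ.2) (x : ℤ) :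
    segMem x Δ ↔ Δ.1 ≤ x ∧ x ≤ Δ.2 := by
  simp only [segMem, segLen, Int.floor_int, id]
  constructor
  · rintro ⟨j, hj, rfl⟩
    omega
  · rintro ⟨hlo, hhi⟩
    exact ⟨(x - Δ.1).toNat, by omega, by omega⟩

theorem subSeg_iff_of_le {Δ1 Δ2 : ℤ × ℤ} (h1 : Δ1.1 ≤ Δ1.2) (h2 : Δ2.1 ≤ Δ2.2) :
    SubSeg Δ1 Δ2 ↔ Δ2.1 ≤ Δ1.1 ∧ Δ1.2 ≤ Δ2.2 := by
  simp only [SubSeg, segMem_iff_of_le h1, segMem_iff_of_le h2]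
  constructor
  · intro h
    exact ⟨(h Δ1.1 ⟨le_rfl, h1⟩).1, (h Δ1.2 ⟨h1, le_rfl⟩).2⟩
  · intro h x hx
    omega

section Linked

variable {Δ1 Δ2 : ℤ × ℤ}

theorem Linked.max_fst_le_min_snd_add_one_s3 (h : Linked Δ1 Δ2)
    (h1 : Δ1.1 ≤ Δ1.2) (h2 : Δ2.1 ≤ Δ2.2) :
    max Δ1.1 Δ2.1 ≤ min Δ1.2 Δ2.2 + 1 := by
  obtain ⟨⟨Δ, ⟨n, hn⟩, hunion⟩, -, -⟩ := h
  have hΔ : Δ.1 ≤ Δ.2 := by omega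
  simp only [segMem_iff_of_le hΔ, segMem_iff_of_le h1, segMem_iff_of_le h2] at hunion
  have hb := (hunion Δ1.1).2 (Or.inl ⟨le_rfl, h1⟩)
  have he := (hunion Δ1.2).2 (Or.inl ⟨h1, le_rfl⟩)
  have hb' := (hunion Δ2.1).2 (Or.inr ⟨le_rfl, h2⟩)
  have he' := (hunion Δ2.2).2 (Or.inr ⟨h2, le_rfl⟩)
  -- the point just after the first segment to end lies in the union, hence in the other segment
  by_contra! hgap
  have := (hunion (min Δ1.2 Δ2.2 + 1)).1 (by omega)
  omega

theorem Linked.lt_and_lt_or_lt_and_lt_s3 (h : Linked Δ1 Δ2)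
    (h1 : Δ1.1 ≤ Δ1.2) (h2 : Δ2.1 ≤ Δ2.2) :
    (Δ1.1 < Δ2.1 ∧ Δ1.2 < Δ2.2) ∨ (Δ2.1 < Δ1.1 ∧ Δ2.2 < Δ1.2) := by
  have h12 := h.2.1
  have h21 := h.2.2
  rw [subSeg_iff_of_le h1 h2] at h12
  rw [subSeg_iff_of_le h2 h1] at h21
  omega

/-- The intersection length `min e₁ e₂ - max b₁ b₂ + 1` is `0` when the linked segments are
juxtaposed, so the inequality covers both shapes of the elementary operation. -/
theorem Linked.sq_len_add_sq_len_lt (h : Linked Δ1 Δ2)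
    (h1 : Δ1.1 ≤ Δ1.2) (h2 : Δ2.1 ≤ Δ2.2) :
    (Δ1.2 - Δ1.1 + 1) ^ 2 + (Δ2.2 - Δ2.1 + 1) ^ 2 <
      (max Δ1.2 Δ2.2 - min Δ1.1 Δ2.1 + 1) ^ 2 +
        (min Δ1.2 Δ2.2 - max Δ1.1 Δ2.1 + 1) ^ 2 := by
  have hlt := h.lt_and_lt_or_lt_and_lt_s3 h1 h2
  apply sq_add_sq_lt_sq_add_sq <;> omega

end Linked

end MS

/-- a nontrivial elementary operation strictly increases
the sum of the squared lengths. -/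
theorem elemOp_sq_lt (α β : Multiset (ℤ × ℤ)) (hval : ∀ Δ ∈ α, Δ.1 ≤ Δ.2)
    (h : MS.ElemOp α β) :
    (α.map (fun Δ => (Δ.2 - Δ.1 + 1) ^ 2)).sum <
      (β.map (fun Δ => (Δ.2 - Δ.1 + 1) ^ 2)).sum := by
  obtain ⟨Δ1, Δ2, γ, rfl, hlink, rfl⟩ := h
  have h1 : Δ1.1 ≤ Δ1.2 := hval Δ1 (Multiset.mem_cons_self _ _)
  have h2 : Δ2.1 ≤ Δ2.2 := hval Δ2 (Multiset.mem_cons_of_mem (Multiset.mem_cons_self _ _))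
  have hlt := hlink.sq_len_add_sq_len_lt h1 h2
  split_ifs with hmeet
  · simp only [Multiset.map_cons, Multiset.sum_cons]
    linarith
  · have hempty : min Δ1.2 Δ2.2 - max Δ1.1 Δ2.1 + 1 = 0 := by
      have := hlink.max_fst_le_min_snd_add_one_s3 h1 h2
      omega
    simp only [Multiset.map_cons, Multiset.sum_cons]
    rw [hempty] at hlt
    linarith
end

section
/- Let β be a multi-segment, and for i ≥ 0 let β^i denote the result of applying the MW-removal step i times (β^0 = β, β^{i+1} = β^i \ M(β^i)), with M(β^i) = [m^i, e^i]. Let e = e^0 be the maximal end value in β and t = #{Δ ∈ β : e(Δ) = e}. Then e^i = e for all 0 ≤ i ≤ t−1, and m^0 ≤ m^1 ≤ ... ≤ m^{t−1}. -/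
/-!
Each MW step removes exactly one segment ending at `e` (the head of the selected chain: the other
chain members end strictly below `e`, and shortening only lowers ends) and creates none. So `β^i`
still has `t - i` segments ending at `e`, and for `i < t` the selected chain starts there.

For `m`, compare the chain `Δ_0, Δ_1, …` selected in `β^i` with the chain `Δ'_0, Δ'_1, …`
selected in `β^{i+1}`, where `Δ_k` and `Δ'_k` end at `e - k`. By induction on `k`, if `Δ'_k`
exists then so does `Δ_k`, and `b(Δ'_k) ≤ b(Δ_k)`. Indeed `Δ'_k` is either a segment of `β^i`,
dominated by the greedy choice of `Δ_k` (whose existence the stopping rule forces), or `Δ_{k-1}`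
shortened; the latter is impossible, as `b(Δ_{k-1}) ≥ b(Δ'_{k-1}) > b(Δ'_k)`. So the new chain is
no longer than the old one, and as `m = e - (length - 1)` this is `m^i ≤ m^{i+1}`.
-/
namespace MS

variable {R : Type*} [CommRing R] [LinearOrder R]

/-- `β \ M(β)` in terms of the chain `ch` selected by the MW algorithm (cf. `MWStep`). -/
def mwRemainder (β : Multiset (R × R)) (ch : List (R × R)) : Multiset (R × R) :=
  (β - ↑ch) + ↑((ch.filter (fun Γ => Γ.1 ≠ Γ.2)).map (fun Γ => (Γ.1, Γ.2 - 1)))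

lemma mem_mwRemainder {β : Multiset (R × R)} {ch : List (R × R)} {Γ : R × R}
    (h : Γ ∈ mwRemainder β ch) : Γ ∈ β ∨ ∃ Δ ∈ ch, Γ = (Δ.1, Δ.2 - 1) := by
  rcases Multiset.mem_add.mp h with h | h
  · exact .inl (Multiset.mem_of_le (Multiset.sub_le_self _ _) h)
  · obtain ⟨Δ, hΔ, rfl⟩ := List.mem_map.mp (Multiset.mem_coe.mp h)
    exact .inr ⟨Δ, (List.mem_filter.mp hΔ).1, rfl⟩

namespace IsMWChain

variable {β : Multiset (R × R)} {ch : List (R × R)}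

lemma length_pos (hc : IsMWChain β ch) : 0 < ch.length := List.length_pos_iff.mpr hc.1

lemma headD_eq (hc : IsMWChain β ch) : ch.headD (0, 0) = ch[0]'hc.length_pos := by
  obtain ⟨a, l, rfl⟩ := List.exists_cons_of_ne_nil hc.1
  rfl

lemma getLastD_eq (hc : IsMWChain β ch) :
    ch.getLastD (0, 0) = ch[ch.length - 1]'(Nat.sub_lt hc.length_pos one_pos) := by
  rw [List.getLastD_eq_getLast?, List.getLast?_eq_some_getLast hc.1, Option.getD_some,
    List.getLast_eq_getElem]

lemma mem_of_mem (hc : IsMWChain β ch) {Δ : R × R} (h : Δ ∈ ch) : Δ ∈ β :=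
  Multiset.mem_of_le hc.2.1 (Multiset.mem_coe.mpr h)

lemma snd_le_head (hc : IsMWChain β ch) {Γ : R × R} (hΓ : Γ ∈ β) :
    Γ.2 ≤ (ch[0]'hc.length_pos).2 :=
  hc.headD_eq ▸ hc.2.2.1 Γ hΓ

lemma fst_le_head (hc : IsMWChain β ch) {Γ : R × R} (hΓ : Γ ∈ β)
    (hsnd : Γ.2 = (ch[0]'hc.length_pos).2) : Γ.1 ≤ (ch[0]'hc.length_pos).1 :=
  hc.headD_eq ▸ hc.2.2.2.1 Γ hΓ (hc.headD_eq ▸ hsnd)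

lemma rel_getElem_succ (hc : IsMWChain β ch) (k : ℕ) (hk : k + 1 < ch.length) :
    ch[k + 1].2 = ch[k].2 - 1 ∧ ch[k + 1].1 < ch[k].1 ∧
      ∀ Γ ∈ β, Γ.2 = ch[k].2 - 1 → Γ.1 < ch[k].1 → Γ.1 ≤ ch[k + 1].1 :=
  List.isChain_iff_getElem.mp hc.2.2.2.2.1 k hk

lemma snd_getElem (hc : IsMWChain β ch) (k : ℕ) (hk : k < ch.length) :
    ch[k].2 = (ch[0]'hc.length_pos).2 - k := by
  induction k with
  | zero => simp
  | succ k ih =>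
    rw [(hc.rel_getElem_succ k hk).1, ih (by omega)]
    push_cast
    ring

lemma getLastD_snd (hc : IsMWChain β ch) :
    (ch.getLastD (0, 0)).2 = (ch.headD (0, 0)).2 - (ch.length - 1 : ℕ) := by
  rw [hc.getLastD_eq, hc.snd_getElem, hc.headD_eq]

lemma exists_succ_of_candidate (hc : IsMWChain β ch) {Γ : R × R} (hΓ : Γ ∈ β) {k : ℕ}
    (hk : k < ch.length) (hsnd : Γ.2 = ch[k].2 - 1) (hfst : Γ.1 < ch[k].1) :
    ∃ hk' : k + 1 < ch.length, Γ.1 ≤ ch[k + 1].1 := by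
  by_cases hk' : k + 1 < ch.length
  · exact ⟨hk', (hc.rel_getElem_succ k hk').2.2 Γ hΓ hsnd hfst⟩
  · have hlast : ch[k] = ch.getLastD (0, 0) := by
      simp only [hc.getLastD_eq, show ch.length - 1 = k by omega]
    obtain ⟨-, -, -, -, -, hstop⟩ := hc
    rw [hlast] at hsnd hfst
    exact absurd hfst (hstop Γ hΓ hsnd)

variable [IsStrictOrderedRing R]

lemma eq_getElem_of_mem (hc : IsMWChain β ch) {Δ : R × R} (hΔ : Δ ∈ ch) {k : ℕ}
    (hk : k < ch.length) (hsnd : Δ.2 = ch[k].2) : Δ = ch[k] := by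
  obtain ⟨j, hj, rfl⟩ := List.mem_iff_getElem.mp hΔ
  rw [hc.snd_getElem j hj, hc.snd_getElem k hk, sub_right_inj, Nat.cast_inj] at hsnd
  simp only [hsnd]

lemma filter_snd_eq_head (hc : IsMWChain β ch) :
    ch.filter (·.2 = (ch.headD (0, 0)).2) = [ch.headD (0, 0)] := by
  obtain ⟨a, l, rfl⟩ := List.exists_cons_of_ne_nil hc.1
  have htail : ∀ x ∈ l, x.2 < a.2 := by
    intro x hx
    obtain ⟨j, hj, rfl⟩ := List.mem_iff_getElem.mp hx
    have h := hc.snd_getElem (j + 1) (by simpa using hj)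
    simp only [List.getElem_cons_succ, List.getElem_cons_zero] at h
    have : (0 : R) < (j + 1 : ℕ) := by positivity
    linarith
  rw [List.headD_cons, List.filter_cons_of_pos (by simp),
    List.filter_eq_nil_iff.mpr fun x hx => by simpa using (htail x hx).ne]

theorem fst_getElem_le_of_mwRemainder {ch' : List (R × R)} (hc : IsMWChain β ch)
    (hc' : IsMWChain (mwRemainder β ch) ch')
    (hhead : (ch'.headD (0, 0)).2 = (ch.headD (0, 0)).2) :
    ∀ k (hk' : k < ch'.length), ∃ hk : k < ch.length, ch'[k].1 ≤ ch[k].1 := by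
  rw [hc.headD_eq, hc'.headD_eq] at hhead
  have hsnd : ∀ k (hk' : k < ch'.length) (hk : k < ch.length), ch'[k].2 = ch[k].2 := by
    intro k hk' hk
    rw [hc.snd_getElem k hk, hc'.snd_getElem k hk', hhead]
  intro k
  induction k with
  | zero =>
    intro hk'
    refine ⟨hc.length_pos, ?_⟩
    rcases mem_mwRemainder (hc'.mem_of_mem (List.getElem_mem hk')) with h | ⟨Δ, hΔ, heq⟩
    · exact hc.fst_le_head h hhead
    · have := hc.snd_le_head (hc.mem_of_mem hΔ)
      rw [← hhead, heq] at this
      dsimp only at this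
      linarith
  | succ k ih =>
    intro hk'
    obtain ⟨hk, hle⟩ := ih (by omega)
    obtain ⟨hsnd', hlt', -⟩ := hc'.rel_getElem_succ k hk'
    rw [hsnd k (by omega) hk] at hsnd'
    have hlt : ch'[k + 1].1 < ch[k].1 := hlt'.trans_le hle
    rcases mem_mwRemainder (hc'.mem_of_mem (List.getElem_mem hk')) with h | ⟨Δ, hΔ, heq⟩
    · exact hc.exists_succ_of_candidate h hk hsnd' hlt
    · have hΔk : Δ = ch[k] := hc.eq_getElem_of_mem hΔ hk (by
        have := congrArg Prod.snd heq
        simp only at this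
        linarith)
      rw [heq, hΔk] at hlt
      exact absurd hlt (lt_irrefl _)

theorem length_le_of_mwRemainder {ch' : List (R × R)} (hc : IsMWChain β ch)
    (hc' : IsMWChain (mwRemainder β ch) ch')
    (hhead : (ch'.headD (0, 0)).2 = (ch.headD (0, 0)).2) :
    ch'.length ≤ ch.length := by
  obtain ⟨h, -⟩ := hc.fst_getElem_le_of_mwRemainder hc' hhead (ch'.length - 1)
    (Nat.sub_lt hc'.length_pos one_pos)
  omega

end IsMWChain

namespace MWStep

variable {β β' β'' : Multiset (R × R)} {Δ Δ' : R × R} {e : R}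

lemma snd_eq_of_mem (h : MWStep β Δ β') (hle : ∀ Γ ∈ β, Γ.2 ≤ e) (hmem : ∃ Γ ∈ β, Γ.2 = e) :
    Δ.2 = e := by
  obtain ⟨ch, hc, rfl, -⟩ := h
  obtain ⟨Γ, hΓ, rfl⟩ := hmem
  dsimp only
  rw [hc.headD_eq]
  exact le_antisymm (hle _ (hc.mem_of_mem (List.getElem_mem _))) (hc.snd_le_head hΓ)

variable [IsStrictOrderedRing R]

lemma snd_le (h : MWStep β Δ β') (hle : ∀ Γ ∈ β, Γ.2 ≤ e) : ∀ Γ ∈ β', Γ.2 ≤ e := by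
  obtain ⟨ch, hc, -, rfl⟩ := h
  intro Γ hΓ
  rcases mem_mwRemainder hΓ with h | ⟨Δ, hΔ, rfl⟩
  · exact hle Γ h
  · have := hle Δ (hc.mem_of_mem hΔ)
    dsimp only
    linarith

lemma card_filter_snd_eq (h : MWStep β Δ β') (hle : ∀ Γ ∈ β, Γ.2 ≤ e) (hΔ : Δ.2 = e) :
    (β'.filter (·.2 = e)).card + 1 = (β.filter (·.2 = e)).card := by
  obtain ⟨ch, hc, rfl, rfl⟩ := h
  dsimp only at hΔ
  have hshort : Multiset.filter (fun Γ : R × R => Γ.2 = e)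
      (↑((ch.filter (fun Γ => Γ.1 ≠ Γ.2)).map (fun Γ => (Γ.1, Γ.2 - 1)))) = 0 := by
    refine Multiset.filter_eq_nil.mpr fun Γ hΓ => ?_
    obtain ⟨Δ, hΔ, rfl⟩ := List.mem_map.mp (Multiset.mem_coe.mp hΓ)
    have := hle Δ (hc.mem_of_mem (List.mem_filter.mp hΔ).1)
    dsimp only
    linarith
  have hhead : Multiset.filter (fun Γ : R × R => Γ.2 = e) ↑ch = {ch.headD (0, 0)} := by
    rw [Multiset.filter_coe, ← hΔ, hc.filter_snd_eq_head]
    rfl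
  have hpos := Multiset.card_le_card (Multiset.filter_le_filter (fun Γ : R × R => Γ.2 = e) hc.2.1)
  rw [hhead, Multiset.card_singleton] at hpos
  rw [Multiset.filter_add, hshort, add_zero, Multiset.filter_sub,
    Multiset.card_sub (Multiset.filter_le_filter _ hc.2.1), hhead, Multiset.card_singleton]
  omega

theorem fst_le_of_snd_eq (h : MWStep β Δ β') (h' : MWStep β' Δ' β'') (hsnd : Δ'.2 = Δ.2) :
    Δ.1 ≤ Δ'.1 := by
  obtain ⟨ch, hc, rfl, rfl⟩ := h
  obtain ⟨ch', hc', rfl, -⟩ := h'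
  have hlen : ((ch'.length - 1 : ℕ) : R) ≤ (ch.length - 1 : ℕ) :=
    Nat.cast_le.mpr (Nat.sub_le_sub_right (hc.length_le_of_mwRemainder hc' hsnd) 1)
  dsimp only at hsnd ⊢
  rw [hc.getLastD_snd, hc'.getLastD_snd, hsnd]
  linarith

end MWStep

theorem snd_eq_of_iterates [IsStrictOrderedRing R] {B : ℕ → Multiset (R × R)} {M : ℕ → R × R}
    {e : R} {t : ℕ} (hle : ∀ Γ ∈ B 0, Γ.2 ≤ e) (hcard : ((B 0).filter (·.2 = e)).card = t)
    (hstep : ∀ i < t, MWStep (B i) (M i) (B (i + 1))) :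
    ∀ i < t, (M i).2 = e := by
  have hsnd : ∀ i < t, (∀ Γ ∈ B i, Γ.2 ≤ e) → ((B i).filter (·.2 = e)).card = t - i →
      (M i).2 = e := by
    intro i hi hle_i hcard_i
    obtain ⟨Γ, hΓ⟩ := Multiset.card_pos_iff_exists_mem.mp (show 0 < _ by rw [hcard_i]; omega)
    exact (hstep i hi).snd_eq_of_mem hle_i ⟨Γ, Multiset.mem_filter.mp hΓ⟩
  have hinv : ∀ i ≤ t, (∀ Γ ∈ B i, Γ.2 ≤ e) ∧ ((B i).filter (·.2 = e)).card = t - i := by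
    intro i hi
    induction i with
    | zero => exact ⟨hle, hcard⟩
    | succ i ih =>
      obtain ⟨hle_i, hcard_i⟩ := ih (by omega)
      have hcard_succ := (hstep i hi).card_filter_snd_eq hle_i (hsnd i hi hle_i hcard_i)
      exact ⟨(hstep i hi).snd_le hle_i, by omega⟩
  exact fun i hi => hsnd i hi (hinv i hi.le).1 (hinv i hi.le).2

end MS

theorem mw_iterates_e_and_m_general (β : Multiset (ℤ × ℤ))
    (e : ℤ) (he : (∃ Δ ∈ β, Δ.2 = e) ∧ ∀ Δ ∈ β, Δ.2 ≤ e)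
    (t : ℕ) (ht : t = (β.filter (fun Δ => Δ.2 = e)).card)
    (B : ℕ → Multiset (ℤ × ℤ)) (M : ℕ → ℤ × ℤ) (hB0 : B 0 = β)
    (hstep : ∀ i < t, MS.MWStep (B i) (M i) (B (i + 1))) :
    (∀ i < t, (M i).2 = e) ∧ (∀ i j : ℕ, i ≤ j → j < t → (M i).1 ≤ (M j).1) := by
  subst hB0
  have hend : ∀ i < t, (M i).2 = e := MS.snd_eq_of_iterates he.2 ht.symm hstep
  refine ⟨hend, fun i j hij hjt => ?_⟩
  induction j, hij using Nat.le_induction with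
  | base => exact le_rfl
  | succ j _ ih =>
    refine (ih (by omega)).trans ((hstep j (by omega)).fst_le_of_snd_eq (hstep (j + 1) hjt) ?_)
    rw [hend _ hjt, hend j (by omega)]

/-- during the first `t` iterations of the MW algorithm, the end value of
`M(β^i)` stays equal to `e`, and `m^0 ≤ m^1 ≤ ... ≤ m^(t-1)`. -/
theorem mw_iterates_e_and_m (β : Multiset (ℤ × ℤ)) (hval : ∀ Δ ∈ β, Δ.1 ≤ Δ.2) (hne : β ≠ 0)
    (e : ℤ) (he : (∃ Δ ∈ β, Δ.2 = e) ∧ ∀ Δ ∈ β, Δ.2 ≤ e)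
    (t : ℕ) (ht : t = (β.filter (fun Δ => Δ.2 = e)).card)
    (B : ℕ → Multiset (ℤ × ℤ)) (M : ℕ → ℤ × ℤ) (hB0 : B 0 = β)
    (hstep : ∀ i < t, MS.MWStep (B i) (M i) (B (i + 1))) :
    (∀ i < t, (M i).2 = e) ∧ (∀ i j : ℕ, i ≤ j → j < t → (M i).1 ≤ (M j).1) :=
  mw_iterates_e_and_m_general β e he t ht B M hB0 hstep
end

section
/- The Mœglin–Waldspurger involution of the Arthur-type staircase multi-segment δ_{d,a} := {[ (a−d)/2, (a+d)/2 ], [ (a−d)/2 − 1, (a+d)/2 − 1 ], ..., [ (−a−d)/2, (−a+d)/2 ]} (a+1 segments, each of length d+1, with half-integer endpoints when a+d is odd) is δ_{a,d}, i.e. the staircase with roles of a and d swapped: δ~_{d,a} = δ_{a,d}. -/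
/-!
On a staircase `{[x - j, x + ℓ - j] : 0 ≤ j ≤ s}` the greedy Mœglin–Waldspurger chain is the whole
staircase: each segment ends exactly one below the previous one and starts one below it. So one
step of the algorithm outputs `[x + ℓ - s, x + ℓ]` and shortens every segment by one at its end,
leaving the staircase of length `ℓ - 1` (or nothing when `ℓ = 0`). Induction on `ℓ` therefore
outputs the segments `[x + k - s, x + k]` for `k = ℓ, ℓ - 1, …, 0`, which form the staircase with
the roles of `ℓ` and `s` exchanged.
-/

namespace MS

section Staircase

variable {R : Type*} [CommRing R]

def stairList (x : R) (len cnt : ℕ) : List (R × R) :=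
  (List.range (cnt + 1)).map (fun (j : ℕ) => (x - (j : R), x + (len : R) - (j : R)))

theorem coe_stairList (x : R) (len cnt : ℕ) :
    (stairList x len cnt : Multiset (R × R)) = stair x len cnt := by
  rw [stairList, stair, Multiset.range, Multiset.map_coe]

theorem headD_stairList (x : R) (len cnt : ℕ) :
    (stairList x len cnt).headD (0, 0) = (x, x + len) := by
  simp [stairList, List.range_succ_eq_map]

theorem getLastD_stairList (x : R) (len cnt : ℕ) :
    (stairList x len cnt).getLastD (0, 0) = (x - cnt, x + len - cnt) := by
  rw [stairList, List.range_succ, List.map_append, List.map_singleton, List.getLastD_concat]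

theorem mem_stair {x : R} {len cnt : ℕ} {Δ : R × R} :
    Δ ∈ stair x len cnt ↔ ∃ j ≤ cnt, Δ = (x - (j : R), x + (len : R) - (j : R)) := by
  simp only [stair, Multiset.mem_map, Multiset.mem_range, Nat.lt_succ_iff, eq_comm]

theorem stair_succ_cnt (x : R) (len cnt : ℕ) :
    stair x len (cnt + 1) = (x, x + len) ::ₘ stair (x - 1) len cnt := by
  rw [← coe_stairList, ← coe_stairList, Multiset.cons_coe, stairList, stairList,
    List.range_succ_eq_map, List.map_cons, List.map_map]
  congr 2
  · simp
  · refine List.map_congr_left fun j _ => ?_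
    ext <;> simp only [Function.comp_apply, Nat.cast_succ] <;> ring

end Staircase

variable {R : Type*} [CommRing R] [LinearOrder R] [IsStrictOrderedRing R]

theorem isMWChain_stairList (x : R) (len cnt : ℕ) :
    IsMWChain (stair x len cnt) (stairList x len cnt) := by
  unfold IsMWChain
  rw [headD_stairList, getLastD_stairList]
  refine ⟨by simp [stairList], (coe_stairList x len cnt).le, ?_, ?_, ?_, ?_⟩
  · intro Δ hΔ
    obtain ⟨j, -, rfl⟩ := mem_stair.1 hΔ
    simp
  · intro Δ hΔ hend
    obtain ⟨j, -, rfl⟩ := mem_stair.1 hΔ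
    simp_all
  · rw [List.Chain', stairList, List.isChain_map, List.isChain_range_succ]
    intro j _
    refine ⟨by push_cast; ring, by push_cast; linarith, ?_⟩
    intro Γ hΓ hend _
    obtain ⟨i, -, rfl⟩ := mem_stair.1 hΓ
    push_cast at hend ⊢
    linarith
  · intro Γ hΓ hend
    obtain ⟨j, hj, rfl⟩ := mem_stair.1 hΓ
    have : (j : R) ≤ cnt := by exact_mod_cast hj
    simp only at hend ⊢
    linarith

theorem mwStep_stair_succ (x : R) (len cnt : ℕ) :
    MWStep (stair x (len + 1) cnt) (x + (len + 1) - cnt, x + (len + 1)) (stair x len cnt) := by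
  refine ⟨stairList x (len + 1) cnt, isMWChain_stairList x (len + 1) cnt, ?_, ?_⟩
  · rw [headD_stairList, getLastD_stairList]
    push_cast
    ring_nf
  · have hno_empty : (stairList x (len + 1) cnt).filter (fun Γ => Γ.1 ≠ Γ.2) =
        stairList x (len + 1) cnt := by
      rw [List.filter_eq_self]
      intro Γ hΓ
      obtain ⟨j, -, rfl⟩ := List.mem_map.1 hΓ
      have : (0 : R) ≤ len := Nat.cast_nonneg len
      simp only [ne_eq, decide_eq_true_eq]
      push_cast
      intro h
      linarith
    have hshorten : (stairList x (len + 1) cnt).map (fun Γ => (Γ.1, Γ.2 - 1)) =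
        stairList x len cnt := by
      simp only [stairList, List.map_map, Function.comp_def]
      congr 1
      funext j
      ext <;> push_cast <;> ring
    rw [coe_stairList, tsub_self, zero_add, hno_empty, hshorten, coe_stairList]

theorem mwStep_stair_zero (x : R) (cnt : ℕ) :
    MWStep (stair x 0 cnt) (x - cnt, x) 0 := by
  refine ⟨stairList x 0 cnt, isMWChain_stairList x 0 cnt, ?_, ?_⟩
  · rw [headD_stairList, getLastD_stairList]
    simp
  · have hempty : (stairList x 0 cnt).filter (fun Γ => Γ.1 ≠ Γ.2) = [] := by
      rw [List.filter_eq_nil_iff]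
      intro Γ hΓ
      obtain ⟨j, -, rfl⟩ := List.mem_map.1 hΓ
      simp
    rw [coe_stairList, tsub_self, zero_add, hempty]
    rfl

theorem mwDual_stair (len cnt : ℕ) (x : R) :
    MWDual (stair x len cnt) (stair (x + len - cnt) cnt len) := by
  induction len generalizing x with
  | zero =>
    have hout : stair (x + ((0 : ℕ) : R) - cnt) cnt 0 = {(x - cnt, x)} := by
      simp [stair]
    rw [hout]
    exact MWDual.step (mwStep_stair_zero x cnt) MWDual.empty
  | succ len ih =>
    have hout : stair (x + ((len + 1 : ℕ) : R) - cnt) cnt (len + 1) =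
        (x + (len + 1) - cnt, x + (len + 1)) ::ₘ stair (x + len - cnt) cnt len := by
      rw [stair_succ_cnt]
      push_cast
      ring_nf
    rw [hout]
    exact MWDual.step (mwStep_stair_succ x len cnt) (ih x)

end MS

/-- the MW involution of the Arthur staircase `δ_{d,a}` is `δ_{a,d}`. -/
theorem mw_dual_stair (d a : ℕ) :
    MS.MWDual (MS.stair (((a : ℚ) - (d : ℚ)) / 2) d a)
      (MS.stair (((d : ℚ) - (a : ℚ)) / 2) a d) := by
  have hbase : ((d : ℚ) - a) / 2 = ((a : ℚ) - d) / 2 + d - a := by ring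
  rw [hbase]
  exact MS.mwDual_stair d a _
end
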